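/- Under pair Sato-Tate equidistribution for (C, D) and a(p) = C(p) - χ₁(p)/(2√p), b(p) = D(p) - χ₂(p)/(2√p), the sequence of products a(p)·b(p) over primes p changes sign infinitely often: there are infinitely many primes p with a(p)b(p) > 0 and infinitely many with a(p)b(p) < 0. -/

import Mathlib

/-! The corrections `χᵢ(p) / (2√p)` have absolute value `< 1/2`, so `a(p)` has the sign of `C(p)`
whenever `C(p) ∈ [1/2, 1]` or `C(p) ∈ [-1, -1/2]`, and likewise for `b(p)`. By pair equidistribution
the primes with `(C(p), D(p)) ∈ [1/2, 1]²`, resp. `[1/2, 1] × [-1, -1/2]`, have positive density,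
since `μ_ST` charges every nondegenerate interval; a set of primes of positive density is infinite. -/

open MeasureTheory Filter Real Set

noncomputable def muST : Measure ℝ :=
  (volume.restrict (Icc (-1 : ℝ) 1)).withDensity fun t =>
    ENNReal.ofReal ((2 / π) * Real.sqrt (1 - t ^ 2))

open scoped Classical in
noncomputable def primeCount (S : Set ℕ) (x : ℕ) : ℕ :=
  ((Finset.range (x + 1)).filter fun p => p.Prime ∧ p ∈ S).card

noncomputable def primePi (x : ℕ) : ℕ :=
  ((Finset.range (x + 1)).filter Nat.Prime).card

def HasNaturalDensity (S : Set ℕ) (δ : ℝ) : Prop :=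
  Tendsto (fun x : ℕ => (primeCount S x : ℝ) / (primePi x : ℝ)) atTop (nhds δ)

def PairSatoTateEquidistributed (C D : ℕ → ℝ) : Prop :=
  ∀ a₁ b₁ a₂ b₂ : ℝ, -1 ≤ a₁ → a₁ ≤ b₁ → b₁ ≤ 1 → -1 ≤ a₂ → a₂ ≤ b₂ → b₂ ≤ 1 →
    Tendsto
      (fun x : ℕ =>
        (primeCount {p | C p ∈ Icc a₁ b₁ ∧ D p ∈ Icc a₂ b₂} x : ℝ) / (primePi x : ℝ))
      atTop (nhds ((muST (Icc a₁ b₁)).toReal * (muST (Icc a₂ b₂)).toReal))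


lemma two_div_pi_mul_sqrt_one_sub_sq_le_one (t : ℝ) : 2 / π * √(1 - t ^ 2) ≤ 1 := by
  have hπ : 2 / π ≤ 1 := (div_le_one pi_pos).2 two_le_pi
  have hsqrt : √(1 - t ^ 2) ≤ 1 := sqrt_le_one.2 (by nlinarith)
  nlinarith [sqrt_nonneg (1 - t ^ 2)]

instance isFiniteMeasure_muST : IsFiniteMeasure muST := by
  refine isFiniteMeasure_of_le (volume.restrict (Icc (-1 : ℝ) 1)) ?_
  calc muST ≤ (volume.restrict (Icc (-1 : ℝ) 1)).withDensity 1 :=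
        withDensity_mono <| .of_forall fun t =>
          ENNReal.ofReal_le_one.2 (two_div_pi_mul_sqrt_one_sub_sq_le_one t)
    _ = volume.restrict (Icc (-1 : ℝ) 1) := withDensity_one

lemma muST_Icc_pos {a b : ℝ} (ha : -1 ≤ a) (hab : a < b) (hb : b ≤ 1) :
    0 < muST (Icc a b) := by
  refine pos_iff_ne_zero.2 fun h => ?_
  rw [muST, withDensity_apply_eq_zero (Measurable.ennreal_ofReal (by fun_prop)),
    Measure.restrict_apply' measurableSet_Icc] at h
  -- the density vanishes only at `±1`, so the interior of `Icc a b` survives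
  have hsub : Ioo a b ⊆ ({t | ENNReal.ofReal (2 / π * √(1 - t ^ 2)) ≠ 0} ∩ Icc a b) ∩
      Icc (-1) 1 := by
    rintro t ⟨hat, htb⟩
    refine ⟨⟨?_, hat.le, htb.le⟩, by linarith, by linarith⟩
    have : 0 < 1 - t ^ 2 := by nlinarith
    simpa using mul_pos (div_pos two_pos pi_pos) (sqrt_pos.2 this)
  have := measure_mono_null hsub h
  rw [Real.volume_Ioo, ENNReal.ofReal_eq_zero] at this
  linarith

lemma muST_Icc_toReal_pos {a b : ℝ} (ha : -1 ≤ a) (hab : a < b) (hb : b ≤ 1) :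
    0 < (muST (Icc a b)).toReal :=
  ENNReal.toReal_pos (muST_Icc_pos ha hab hb).ne' (measure_ne_top _ _)

lemma primePi_eq_primeCounting (x : ℕ) : primePi x = Nat.primeCounting x :=
  Nat.primesBelow_card_eq_primeCounting' (x + 1)

lemma HasNaturalDensity.infinite {S : Set ℕ} {δ : ℝ} (h : HasNaturalDensity S δ) (hδ : 0 < δ) :
    {p : ℕ | p.Prime ∧ p ∈ S}.Infinite := by
  intro hfin
  have hbound (x : ℕ) : (primeCount S x : ℝ) ≤ hfin.toFinset.card := by
    classical
    exact_mod_cast Finset.card_le_card fun p hp => by simpa using (Finset.mem_filter.1 hp).2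
  have hπ : Tendsto (fun x : ℕ => (primePi x : ℝ)) atTop atTop := by
    simp only [primePi_eq_primeCounting]
    exact tendsto_natCast_atTop_atTop.comp Nat.tendsto_primeCounting
  have hzero : HasNaturalDensity S 0 :=
    squeeze_zero (fun x => by positivity) (fun x => by gcongr; exact hbound x)
      (tendsto_const_nhds.div_atTop hπ)
  exact hδ.ne' (tendsto_nhds_unique h hzero)

lemma abs_div_two_sqrt_lt_half {c x : ℝ} (hc : |c| ≤ 1) (hx : 1 < x) :
    |c / (2 * √x)| < 1 / 2 := by
  have hsqrt : 1 < √x := lt_sqrt_of_sq_lt (by linarith)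
  have hpos : 0 < 2 * √x := by linarith
  rw [abs_div, abs_of_pos hpos, div_lt_iff₀ hpos]
  nlinarith

theorem product_changes_sign_infinitely_often_general (C D : ℕ → ℝ) (χ₁ χ₂ : ℕ → ℝ)
    (hχ₁ : ∀ p : ℕ, χ₁ p = -1 ∨ χ₁ p = 0 ∨ χ₁ p = 1)
    (hχ₂ : ∀ p : ℕ, χ₂ p = -1 ∨ χ₂ p = 0 ∨ χ₂ p = 1)
    (hST : PairSatoTateEquidistributed C D) :
    {p : ℕ | p.Prime ∧
        0 < (C p - χ₁ p / (2 * Real.sqrt p)) * (D p - χ₂ p / (2 * Real.sqrt p))}.Infinite ∧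
      {p : ℕ | p.Prime ∧
        (C p - χ₁ p / (2 * Real.sqrt p)) * (D p - χ₂ p / (2 * Real.sqrt p)) < 0}.Infinite := by
  have hplus := muST_Icc_toReal_pos (a := 1 / 2) (b := 1) (by norm_num) (by norm_num) le_rfl
  have hminus := muST_Icc_toReal_pos (a := -1) (b := -(1 / 2)) le_rfl (by norm_num) (by norm_num)
  have hsmall (p : ℕ) (hp : p.Prime) {c : ℝ} (hc : c = -1 ∨ c = 0 ∨ c = 1) :
      -(1 / 2) < c / (2 * √p) ∧ c / (2 * √p) < 1 / 2 :=
    abs_lt.1 <| abs_div_two_sqrt_lt_half (by rcases hc with rfl | rfl | rfl <;> norm_num)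
      (by exact_mod_cast hp.one_lt)
  constructor
  · refine (HasNaturalDensity.infinite (hST _ _ _ _ (by norm_num) (by norm_num) le_rfl
      (by norm_num) (by norm_num) le_rfl) (mul_pos hplus hplus)).mono ?_
    rintro p ⟨hp, ⟨hC, -⟩, ⟨hD, -⟩⟩
    have h₁ := hsmall p hp (hχ₁ p)
    have h₂ := hsmall p hp (hχ₂ p)
    exact ⟨hp, mul_pos (by linarith) (by linarith)⟩
  · refine (HasNaturalDensity.infinite (hST _ _ _ _ (by norm_num) (by norm_num) le_rfl
      le_rfl (by norm_num) (by norm_num)) (mul_pos hplus hminus)).mono ?_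
    rintro p ⟨hp, ⟨hC, -⟩, ⟨-, hD⟩⟩
    have h₁ := hsmall p hp (hχ₁ p)
    have h₂ := hsmall p hp (hχ₂ p)
    exact ⟨hp, mul_neg_of_pos_of_neg (by linarith) (by linarith)⟩

theorem product_changes_sign_infinitely_often (C D : ℕ → ℝ) (χ₁ χ₂ : ℕ → ℝ)
    (hC : ∀ p : ℕ, p.Prime → C p ∈ Icc (-1 : ℝ) 1)
    (hD : ∀ p : ℕ, p.Prime → D p ∈ Icc (-1 : ℝ) 1)
    (hχ₁ : ∀ p : ℕ, χ₁ p = -1 ∨ χ₁ p = 0 ∨ χ₁ p = 1)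
    (hχ₂ : ∀ p : ℕ, χ₂ p = -1 ∨ χ₂ p = 0 ∨ χ₂ p = 1)
    (hST : PairSatoTateEquidistributed C D) :
    {p : ℕ | p.Prime ∧
        0 < (C p - χ₁ p / (2 * Real.sqrt p)) * (D p - χ₂ p / (2 * Real.sqrt p))}.Infinite ∧
      {p : ℕ | p.Prime ∧
        (C p - χ₁ p / (2 * Real.sqrt p)) * (D p - χ₂ p / (2 * Real.sqrt p)) < 0}.Infinite :=
  product_changes_sign_infinitely_often_general C D χ₁ χ₂ hχ₁ hχ₂ hST
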